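/- arXiv:0911.1713 — 2 statements merged into one kernel-verified Lean document; each statement's English description precedes it below -/
import Mathlib

section
/- For n ≥ 3, every isometry t of the metric space (Sym(n), d_H) is of the form t(φ) = α φ β⁻¹ for all φ, or of the form t(φ) = α φ⁻¹ β⁻¹ for all φ, for some α, β ∈ Sym(n), and this representation is unique. -/
/-- The Hamming distance between two permutations of `Fin n`. -/
def hdist {n : ℕ} (φ ψ : Equiv.Perm (Fin n)) : ℕ :=
  (Finset.univ.filter fun i => φ i ≠ ψ i).card

/-!
After composing with a left translation we may assume `t 1 = 1`. Then `t` preserves the number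
of moved points, so it maps transpositions to transpositions and 3-cycles to 3-cycles. Two
transpositions are at distance 3 exactly when they share a point, and three pairwise
intersecting transpositions either pass through a common point (a star) or form a triangle;
only a triangle lies at distance 2 from a single 3-cycle. Hence `t` maps stars to stars, which
yields a permutation `σ` with `t (a b) = (σ a σ b)`. After conjugating by `σ`, `t` fixes every
transposition, so it sends each 3-cycle to itself or to its inverse; comparing 3-cycles that
share two points (at distance 3 or 4) shows that the choice is the same for all of them. Up to
composing with inversion, `t` then fixes all transpositions and 3-cycles, and a permutation is
determined by its distances to these. Uniqueness holds because `Sym(n)` has trivial center and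
is not abelian.
-/

open Equiv Finset Function

theorem exists_ne_ne {α : Type*} [DecidableEq α] [Fintype α] (h : 3 ≤ Fintype.card α)
    (a b : α) : ∃ c, c ≠ a ∧ c ≠ b := by
  obtain ⟨c, -, hc⟩ := exists_mem_notMem_of_card_lt_card (s := {a, b}) (t := univ)
    (by rw [card_univ]; exact card_le_two.trans_lt (by omega))
  exact ⟨c, by simpa [not_or] using hc⟩

section Cycle3

variable {α : Type*} [DecidableEq α] {a b c : α}

def cycle3 (a b c : α) : Perm α := swap a b * swap b c

theorem cycle3_apply_left (hab : a ≠ b) (hac : a ≠ c) : cycle3 a b c a = b := by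
  simp [cycle3, swap_apply_of_ne_of_ne hab hac]

theorem cycle3_apply_middle (hac : a ≠ c) (hbc : b ≠ c) : cycle3 a b c b = c := by
  simp [cycle3, swap_apply_of_ne_of_ne hac.symm hbc.symm]

theorem cycle3_apply_right : cycle3 a b c c = a := by
  simp [cycle3]

theorem cycle3_apply_of_ne {x : α} (hxa : x ≠ a) (hxb : x ≠ b) (hxc : x ≠ c) :
    cycle3 a b c x = x := by
  simp [cycle3, swap_apply_of_ne_of_ne, *]

theorem support_cycle3 [Fintype α] (hab : a ≠ b) (hac : a ≠ c) (hbc : b ≠ c) :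
    (cycle3 a b c).support = {a, b, c} :=
  Perm.support_swap_mul_swap (by simp [hab, hac, hbc])

theorem isThreeCycle_cycle3 [Fintype α] (hab : a ≠ b) (hac : a ≠ c) (hbc : b ≠ c) :
    (cycle3 a b c).IsThreeCycle := by
  rw [← card_support_eq_three_iff, support_cycle3 hab hac hbc]
  simp [*]

theorem cycle3_rotate (hab : a ≠ b) (hac : a ≠ c) (hbc : b ≠ c) :
    cycle3 b c a = cycle3 a b c := by
  ext x
  by_cases hxa : x = a
  · rw [hxa, cycle3_apply_right, cycle3_apply_left hab hac]
  by_cases hxb : x = b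
  · rw [hxb, cycle3_apply_left hbc hab.symm, cycle3_apply_middle hac hbc]
  by_cases hxc : x = c
  · rw [hxc, cycle3_apply_middle hab.symm hac.symm, cycle3_apply_right]
  rw [cycle3_apply_of_ne hxb hxc hxa, cycle3_apply_of_ne hxa hxb hxc]

theorem inv_cycle3 (hab : a ≠ b) (hac : a ≠ c) (hbc : b ≠ c) :
    (cycle3 a b c)⁻¹ = cycle3 a c b := by
  ext x
  rw [Perm.inv_eq_iff_eq]
  by_cases hxa : x = a
  · rw [hxa, cycle3_apply_left hac hab, cycle3_apply_right]
  by_cases hxb : x = b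
  · rw [hxb, cycle3_apply_right, cycle3_apply_left hab hac]
  by_cases hxc : x = c
  · rw [hxc, cycle3_apply_middle hab hbc.symm, cycle3_apply_middle hac hbc]
  rw [cycle3_apply_of_ne hxa hxc hxb, cycle3_apply_of_ne hxa hxb hxc]

theorem Equiv.Perm.IsThreeCycle.eq_cycle3 [Fintype α] {ρ : Perm α} (hρ : ρ.IsThreeCycle)
    (ha : a ∈ ρ.support) : ρ = cycle3 a (ρ a) (ρ (ρ a)) :=
  hρ.eq_swap_mul_swap_iff_mem_support.2 ha

theorem Equiv.Perm.IsSwap.eq_swap_of_mem_support [Fintype α] {τ : Perm α} (hτ : τ.IsSwap)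
    {p q : α} (hpq : p ≠ q) (hp : p ∈ τ.support) (hq : q ∈ τ.support) : τ = swap p q := by
  obtain ⟨x, y, hxy, rfl⟩ := hτ
  rw [Perm.support_swap hxy] at hp hq
  simp only [mem_insert, mem_singleton] at hp hq
  rcases hp with rfl | rfl <;> rcases hq with rfl | rfl <;> simp_all [swap_comm]

theorem Equiv.Perm.IsSwap.eq_of_apply_eq [Fintype α] {τ τ' : Perm α} (hτ : τ.IsSwap)
    (hτ' : τ'.IsSwap) {p : α} (hp : p ∈ τ.support) (hp' : p ∈ τ'.support) (h : τ p = τ' p) :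
    τ = τ' := by
  rw [hτ.eq_swap_of_mem_support (Perm.mem_support.1 hp).symm hp (Perm.apply_mem_support.2 hp),
    hτ'.eq_swap_of_mem_support (Perm.mem_support.1 hp').symm hp' (Perm.apply_mem_support.2 hp'), h]

end Cycle3

section HammingDistance

variable {n : ℕ}

theorem hdist_eq_card_support (φ ψ : Perm (Fin n)) : hdist φ ψ = #(ψ⁻¹ * φ).support := by
  unfold hdist
  congr 1
  ext i
  simp only [mem_filter, mem_univ, true_and, Perm.mem_support, Perm.coe_mul, comp_apply]
  exact not_congr Perm.inv_eq_iff_eq.symm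

theorem hdist_one_right (φ : Perm (Fin n)) : hdist φ 1 = #φ.support := by
  simp [hdist_eq_card_support]

theorem hdist_eq_zero_iff {φ ψ : Perm (Fin n)} : hdist φ ψ = 0 ↔ φ = ψ := by
  rw [hdist_eq_card_support, card_eq_zero, Perm.support_eq_empty_iff, inv_mul_eq_one, eq_comm]

theorem hdist_mul_left (α φ ψ : Perm (Fin n)) : hdist (α * φ) (α * ψ) = hdist φ ψ := by
  simp [hdist_eq_card_support, mul_assoc]

theorem hdist_mul_right (φ ψ β : Perm (Fin n)) : hdist (φ * β) (ψ * β) = hdist φ ψ := by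
  rw [hdist_eq_card_support, hdist_eq_card_support,
    show (ψ * β)⁻¹ * (φ * β) = β⁻¹ * (ψ⁻¹ * φ) * β⁻¹⁻¹ by group, Perm.card_support_conj]

theorem hdist_inv_inv (φ ψ : Perm (Fin n)) : hdist φ⁻¹ ψ⁻¹ = hdist φ ψ := by
  rw [hdist_eq_card_support, hdist_eq_card_support,
    show ψ⁻¹⁻¹ * φ⁻¹ = ψ * (ψ⁻¹ * φ)⁻¹ * ψ⁻¹ by group, Perm.card_support_conj, Perm.support_inv]

theorem hdist_add_sum_eq (φ τ : Perm (Fin n)) :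
    hdist φ τ + ∑ i ∈ τ.support, (if φ i = τ i then 1 else 0) =
      hdist φ 1 + ∑ i ∈ τ.support, (if φ i = i then 1 else 0) := by
  have sum_support (f : Fin n → ℕ) :
      ∑ i ∈ τ.support, f i = ∑ i, if i ∈ τ.support then f i else 0 := by
    rw [sum_ite_mem, univ_inter]
  rw [sum_support, sum_support, hdist, hdist, card_filter, card_filter, ← sum_add_distrib,
    ← sum_add_distrib]
  refine sum_congr rfl fun i _ => ?_
  by_cases hi : i ∈ τ.support
  · have hτi : τ i ≠ i := Perm.mem_support.1 hi
    by_cases hφ : φ i = τ i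
    · simp [hi, hφ, hτi]
    · by_cases hφ' : φ i = i <;> simp [hi, hφ, hφ', hτi.symm]
  · by_cases hφ : φ i = i <;> simp [hi, hφ, Perm.notMem_support.1 hi]

theorem hdist_swap_add (φ : Perm (Fin n)) {a b : Fin n} (hab : a ≠ b) :
    hdist φ (swap a b) + ((if φ a = b then 1 else 0) + (if φ b = a then 1 else 0)) =
      hdist φ 1 + ((if φ a = a then 1 else 0) + (if φ b = b then 1 else 0)) := by
  have h := hdist_add_sum_eq φ (swap a b)
  rwa [Perm.support_swap hab, sum_pair hab, sum_pair hab, swap_apply_left, swap_apply_right] at h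

theorem hdist_cycle3_add (φ : Perm (Fin n)) {a b c : Fin n} (hab : a ≠ b) (hac : a ≠ c)
    (hbc : b ≠ c) :
    hdist φ (cycle3 a b c) +
        ((if φ a = b then 1 else 0) + (if φ b = c then 1 else 0) + (if φ c = a then 1 else 0)) =
      hdist φ 1 +
        ((if φ a = a then 1 else 0) + (if φ b = b then 1 else 0) + (if φ c = c then 1 else 0)) := by
  have h := hdist_add_sum_eq φ (cycle3 a b c)
  have ha : a ∉ ({b, c} : Finset (Fin n)) := by simp [hab, hac]
  rw [support_cycle3 hab hac hbc, sum_insert ha, sum_pair hbc, sum_insert ha, sum_pair hbc,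
    cycle3_apply_left hab hac, cycle3_apply_middle hac hbc, cycle3_apply_right] at h
  omega

end HammingDistance

section Determination

variable {n : ℕ} {φ φ' : Perm (Fin n)}

theorem apply_eq_self_of_hdist_swap_eq (h1 : hdist φ' 1 = hdist φ 1)
    (hswap : ∀ a b, a ≠ b → hdist φ' (swap a b) = hdist φ (swap a b)) {a : Fin n}
    (ha : φ a = a) : φ' a = a := by
  by_contra hne
  have hab : a ≠ φ' a := Ne.symm hne
  have e := hdist_swap_add φ hab
  have e' := hdist_swap_add φ' hab
  rw [h1, hswap a _ hab] at e'
  have h2 : φ (φ' a) ≠ a := fun h => hab (φ.injective (h.trans ha.symm)).symm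
  have h3 : φ' (φ' a) ≠ φ' a := fun h => hne (φ'.injective h)
  simp only [ha, hab, h2, h3, hne, if_true, if_false] at e e'
  split_ifs at e e' <;> omega

theorem apply_eq_self_iff_of_hdist_swap_eq (h1 : hdist φ' 1 = hdist φ 1)
    (hswap : ∀ a b, a ≠ b → hdist φ' (swap a b) = hdist φ (swap a b)) (a : Fin n) :
    φ' a = a ↔ φ a = a :=
  ⟨apply_eq_self_of_hdist_swap_eq h1.symm fun a b h => (hswap a b h).symm,
    apply_eq_self_of_hdist_swap_eq h1 hswap⟩

theorem apply_eq_of_hdist_swap_eq (h1 : hdist φ' 1 = hdist φ 1)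
    (hswap : ∀ a b, a ≠ b → hdist φ' (swap a b) = hdist φ (swap a b)) {i j : Fin n}
    (hij : i ≠ j) (hφi : φ i = j) (hne : φ' i ≠ j) : φ' j = i ∧ φ j ≠ i := by
  have hφii : φ i ≠ i := fun h => hij (h.symm.trans hφi)
  have hφj : φ j ≠ j := fun h => hij (φ.injective (hφi.trans h.symm))
  have hφ'i : φ' i ≠ i := mt (apply_eq_self_iff_of_hdist_swap_eq h1 hswap i).1 hφii
  have hφ'j : φ' j ≠ j := mt (apply_eq_self_iff_of_hdist_swap_eq h1 hswap j).1 hφj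
  have e := hdist_swap_add φ hij
  have e' := hdist_swap_add φ' hij
  rw [h1, hswap i j hij] at e'
  rw [if_pos hφi, if_neg hφii, if_neg hφj] at e
  rw [if_neg hne, if_neg hφ'i, if_neg hφ'j] at e'
  by_cases hφ'ji : φ' j = i
  · refine ⟨hφ'ji, fun h => ?_⟩
    rw [if_pos h] at e
    rw [if_pos hφ'ji] at e'
    omega
  · rw [if_neg hφ'ji] at e'
    omega

theorem eq_of_hdist_eq (h1 : hdist φ' 1 = hdist φ 1)
    (hswap : ∀ a b, a ≠ b → hdist φ' (swap a b) = hdist φ (swap a b))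
    (hcycle : ∀ a b c, a ≠ b → a ≠ c → b ≠ c →
      hdist φ' (cycle3 a b c) = hdist φ (cycle3 a b c)) : φ' = φ := by
  have fix := apply_eq_self_iff_of_hdist_swap_eq h1 hswap
  refine Equiv.ext fun i => ?_
  obtain ⟨j, hφi⟩ : ∃ j, φ i = j := ⟨_, rfl⟩
  by_cases hij : i = j
  · subst hij
    rw [(fix i).2 hφi, hφi]
  rw [hφi]
  by_contra hne
  obtain ⟨hφ'j, hφji⟩ := apply_eq_of_hdist_swap_eq h1 hswap hij hφi hne
  obtain ⟨k, hφj⟩ : ∃ k, φ j = k := ⟨_, rfl⟩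
  have hφii : φ i ≠ i := fun h => hij (h.symm.trans hφi)
  have hjk : j ≠ k := fun h => hij (φ.injective (hφi.trans (hφj.trans h.symm).symm))
  have hφjj : φ j ≠ j := fun h => hjk (h.symm.trans hφj)
  have hik : i ≠ k := fun h => hφji (hφj.trans h.symm)
  have hφk : φ k ≠ k := fun h => hjk (φ.injective (hφj.trans h.symm))
  have c := hdist_cycle3_add φ hij hik hjk
  have c' := hdist_cycle3_add φ' hij hik hjk
  rw [h1, hcycle i j k hij hik hjk] at c'
  rw [if_pos hφi, if_pos hφj, if_neg hφii, if_neg hφjj, if_neg hφk] at c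
  rw [if_neg hne, if_neg (hφ'j ▸ hik), if_neg fun h => hjk (φ'.injective (hφ'j.trans h.symm)),
    if_neg (mt (fix i).1 hφii), if_neg (mt (fix j).1 hφjj), if_neg (mt (fix k).1 hφk)] at c'
  omega

end Determination

section SmallDistances

variable {n : ℕ}

theorem hdist_swap_swap {a b c : Fin n} (hab : a ≠ b) (hac : a ≠ c) (hbc : b ≠ c) :
    hdist (swap a b) (swap a c) = 3 := by
  rw [hdist_eq_card_support, swap_inv]
  exact (Perm.isThreeCycle_swap_mul_swap_same hac hab hbc.symm).card_support

theorem exists_mem_support_of_hdist_eq_three {τ τ' : Perm (Fin n)} (hτ : τ.IsSwap)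
    (hτ' : τ'.IsSwap) (h : hdist τ τ' = 3) : ∃ p, p ∈ τ.support ∧ p ∈ τ'.support := by
  by_contra hdisj
  have hd : Perm.Disjoint τ'⁻¹ τ := by
    rw [Perm.disjoint_iff_disjoint_support, Perm.support_inv, Finset.disjoint_left]
    exact fun p hp' hp => hdisj ⟨p, hp, hp'⟩
  rw [hdist_eq_card_support, hd.card_support_mul, Perm.support_inv,
    Perm.card_support_eq_two.2 hτ, Perm.card_support_eq_two.2 hτ'] at h
  omega

theorem hdist_cycle3_swap_left {a b c : Fin n} (hbc : b ≠ c) :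
    hdist (cycle3 a b c) (swap a b) = 2 := by
  rw [hdist_eq_card_support, cycle3, swap_inv, swap_mul_self_mul, Perm.card_support_swap hbc]

theorem hdist_cycle3_swap {a b c : Fin n} (hab : a ≠ b) (hac : a ≠ c) (hbc : b ≠ c) :
    hdist (cycle3 a b c) (swap a b) = 2 ∧ hdist (cycle3 a b c) (swap a c) = 2 ∧
      hdist (cycle3 a b c) (swap b c) = 2 := by
  refine ⟨hdist_cycle3_swap_left hbc, ?_, ?_⟩
  · rw [← cycle3_rotate hab hac hbc, ← cycle3_rotate hbc hab.symm hac.symm, swap_comm]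
    exact hdist_cycle3_swap_left hab
  · rw [← cycle3_rotate hab hac hbc]
    exact hdist_cycle3_swap_left hac.symm

theorem mem_support_of_hdist_swap_eq_two {ρ : Perm (Fin n)} (hρ : #ρ.support = 3) {a b : Fin n}
    (hab : a ≠ b) (h : hdist ρ (swap a b) = 2) : a ∈ ρ.support := by
  rw [Perm.mem_support]
  intro ha
  have e := hdist_swap_add ρ hab
  rw [h, hdist_one_right, hρ, if_pos ha, if_neg fun h => hab (ha.symm.trans h),
    if_neg fun h => hab (ρ.injective (ha.trans h.symm))] at e
  omega

/-- The 3-cycle would have to move the common point and the three other endpoints. -/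
theorem not_hdist_eq_two_of_common_point {ρ : Perm (Fin n)} (hρ : #ρ.support = 3)
    {τ₁ τ₂ τ₃ : Perm (Fin n)} (hτ₁ : τ₁.IsSwap) (hτ₂ : τ₂.IsSwap) (hτ₃ : τ₃.IsSwap)
    (h₁₂ : τ₁ ≠ τ₂) (h₁₃ : τ₁ ≠ τ₃) (h₂₃ : τ₂ ≠ τ₃) {p : Fin n} (hp₁ : p ∈ τ₁.support)
    (hp₂ : p ∈ τ₂.support) (hp₃ : p ∈ τ₃.support) :
    ¬(hdist ρ τ₁ = 2 ∧ hdist ρ τ₂ = 2 ∧ hdist ρ τ₃ = 2) := by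
  rintro ⟨hd₁, hd₂, hd₃⟩
  have hmem {τ : Perm (Fin n)} (hτ : τ.IsSwap) (hp : p ∈ τ.support) (hd : hdist ρ τ = 2) :
      τ p ≠ p ∧ p ∈ ρ.support ∧ τ p ∈ ρ.support := by
    have hpq := Perm.mem_support.1 hp
    rw [hτ.eq_swap_of_mem_support hpq.symm hp (Perm.apply_mem_support.2 hp)] at hd
    exact ⟨hpq, mem_support_of_hdist_swap_eq_two hρ hpq.symm hd,
      mem_support_of_hdist_swap_eq_two hρ hpq (swap_comm p _ ▸ hd)⟩
  obtain ⟨hq₁, hp, hm₁⟩ := hmem hτ₁ hp₁ hd₁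
  obtain ⟨hq₂, -, hm₂⟩ := hmem hτ₂ hp₂ hd₂
  obtain ⟨hq₃, -, hm₃⟩ := hmem hτ₃ hp₃ hd₃
  have hsub : ({p, τ₁ p, τ₂ p, τ₃ p} : Finset (Fin n)) ⊆ ρ.support := by
    simp only [insert_subset_iff, singleton_subset_iff]
    exact ⟨hp, hm₁, hm₂, hm₃⟩
  have := card_le_card hsub
  rw [hρ, card_insert_of_notMem (by simp [hq₁.symm, hq₂.symm, hq₃.symm]),
    card_insert_of_notMem (by simp [mt (hτ₁.eq_of_apply_eq hτ₂ hp₁ hp₂) h₁₂,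
      mt (hτ₁.eq_of_apply_eq hτ₃ hp₁ hp₃) h₁₃]),
    card_pair (mt (hτ₂.eq_of_apply_eq hτ₃ hp₂ hp₃) h₂₃)] at this
  omega

theorem exists_hdist_eq_two_of_no_common_point {τ₁ τ₂ τ₃ : Perm (Fin n)} (hτ₁ : τ₁.IsSwap)
    (hτ₂ : τ₂.IsSwap) (hτ₃ : τ₃.IsSwap) (h₁₂ : ∃ p, p ∈ τ₁.support ∧ p ∈ τ₂.support)
    (h₁₃ : ∃ q, q ∈ τ₁.support ∧ q ∈ τ₃.support) (h₂₃ : ∃ r, r ∈ τ₂.support ∧ r ∈ τ₃.support)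
    (hno : ¬∃ p, p ∈ τ₁.support ∧ p ∈ τ₂.support ∧ p ∈ τ₃.support) :
    ∃ ρ : Perm (Fin n), #ρ.support = 3 ∧
      hdist ρ τ₁ = 2 ∧ hdist ρ τ₂ = 2 ∧ hdist ρ τ₃ = 2 := by
  obtain ⟨p, hp₁, hp₂⟩ := h₁₂
  obtain ⟨q, hq₁, hq₃⟩ := h₁₃
  obtain ⟨r, hr₂, hr₃⟩ := h₂₃
  have hpq : p ≠ q := by rintro rfl; exact hno ⟨p, hp₁, hp₂, hq₃⟩
  have hpr : p ≠ r := by rintro rfl; exact hno ⟨p, hp₁, hp₂, hr₃⟩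
  have hqr : q ≠ r := by rintro rfl; exact hno ⟨q, hq₁, hr₂, hq₃⟩
  refine ⟨cycle3 p q r, (isThreeCycle_cycle3 hpq hpr hqr).card_support, ?_⟩
  rw [hτ₁.eq_swap_of_mem_support hpq hp₁ hq₁, hτ₂.eq_swap_of_mem_support hpr hp₂ hr₂,
    hτ₃.eq_swap_of_mem_support hqr hq₃ hr₃]
  exact hdist_cycle3_swap hpq hpr hqr

end SmallDistances

section CycleDistances

variable {n : ℕ} {a b c d : Fin n}

theorem hdist_cycle3_cycle3 (hbc : b ≠ c) (hbd : b ≠ d) (hcd : c ≠ d) :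
    hdist (cycle3 a b d) (cycle3 a b c) = 3 := by
  rw [hdist_eq_card_support, cycle3, cycle3, mul_inv_rev, swap_inv, swap_inv, mul_assoc,
    swap_mul_self_mul]
  exact (Perm.isThreeCycle_swap_mul_swap_same hbc hbd hcd).card_support

theorem hdist_cycle3_cycle3_rev (hab : a ≠ b) (hac : a ≠ c) (hbc : b ≠ c) (had : a ≠ d)
    (hbd : b ≠ d) (hcd : c ≠ d) : hdist (cycle3 a d b) (cycle3 a b c) = 4 := by
  have e := hdist_cycle3_add (cycle3 a d b) hab hac hbc
  rw [hdist_one_right, (isThreeCycle_cycle3 had hab hbd.symm).card_support,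
    cycle3_apply_left had hab, cycle3_apply_right, cycle3_apply_of_ne hac.symm hcd hbc.symm,
    if_neg hbd.symm, if_neg hac, if_neg hac.symm, if_neg had.symm, if_neg hab,
    if_pos rfl] at e
  omega

end CycleDistances

def IsHammingIsometry {n : ℕ} (u : Perm (Fin n) → Perm (Fin n)) : Prop :=
  ∀ φ ψ, hdist (u φ) (u ψ) = hdist φ ψ

namespace IsHammingIsometry

variable {n : ℕ} {u : Perm (Fin n) → Perm (Fin n)}

theorem injective (hu : IsHammingIsometry u) : Injective u := fun φ ψ h =>
  hdist_eq_zero_iff.1 (hu φ ψ ▸ hdist_eq_zero_iff.2 h)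

theorem surjective (hu : IsHammingIsometry u) : Surjective u :=
  Finite.injective_iff_surjective.1 hu.injective

theorem mul_left (hu : IsHammingIsometry u) (α : Perm (Fin n)) :
    IsHammingIsometry fun φ => α * u φ := fun φ ψ => (hdist_mul_left _ _ _).trans (hu φ ψ)

theorem conj (hu : IsHammingIsometry u) (σ : Perm (Fin n)) :
    IsHammingIsometry fun φ => σ⁻¹ * u φ * σ := fun φ ψ =>
  (hdist_mul_right _ _ _).trans ((hdist_mul_left _ _ _).trans (hu φ ψ))

theorem inv (hu : IsHammingIsometry u) : IsHammingIsometry fun φ => (u φ)⁻¹ := fun φ ψ =>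
  (hdist_inv_inv _ _).trans (hu φ ψ)

theorem card_support_apply (hu : IsHammingIsometry u) (hu1 : u 1 = 1) (φ : Perm (Fin n)) :
    #(u φ).support = #φ.support := by
  have h := hu φ 1
  rwa [hu1, hdist_one_right, hdist_one_right] at h

theorem isSwap_apply (hu : IsHammingIsometry u) (hu1 : u 1 = 1) {τ : Perm (Fin n)}
    (hτ : τ.IsSwap) : (u τ).IsSwap := by
  rw [← Perm.card_support_eq_two, hu.card_support_apply hu1, Perm.card_support_eq_two.2 hτ]

/-- Otherwise the images would form a triangle, and the preimage of its 3-cycle would lie at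
distance `2` from three transpositions through `a`. -/
theorem exists_common_point_apply_swap (hu : IsHammingIsometry u) (hu1 : u 1 = 1)
    {a x₁ x₂ x₃ : Fin n} (ha₁ : a ≠ x₁) (ha₂ : a ≠ x₂) (ha₃ : a ≠ x₃) (h₁₂ : x₁ ≠ x₂)
    (h₁₃ : x₁ ≠ x₃) (h₂₃ : x₂ ≠ x₃) :
    ∃ p, p ∈ (u (swap a x₁)).support ∧ p ∈ (u (swap a x₂)).support ∧
      p ∈ (u (swap a x₃)).support := by
  have hswap {x} (hax : a ≠ x) : (u (swap a x)).IsSwap := hu.isSwap_apply hu1 ⟨a, x, hax, rfl⟩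
  have hmeet {x y} (hax : a ≠ x) (hay : a ≠ y) (hxy : x ≠ y) :
      ∃ p, p ∈ (u (swap a x)).support ∧ p ∈ (u (swap a y)).support :=
    exists_mem_support_of_hdist_eq_three (hswap hax) (hswap hay)
      ((hu _ _).trans (hdist_swap_swap hax hay hxy))
  by_contra hno
  obtain ⟨ρ', hρ', hd₁, hd₂, hd₃⟩ := exists_hdist_eq_two_of_no_common_point (hswap ha₁)
    (hswap ha₂) (hswap ha₃) (hmeet ha₁ ha₂ h₁₂) (hmeet ha₁ ha₃ h₁₃) (hmeet ha₂ ha₃ h₂₃) hno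
  obtain ⟨ρ, rfl⟩ := hu.surjective ρ'
  rw [hu.card_support_apply hu1] at hρ'
  rw [hu] at hd₁ hd₂ hd₃
  have ha {x} (hax : a ≠ x) : a ∈ (swap a x).support := by simp [Perm.support_swap hax]
  exact not_hdist_eq_two_of_common_point hρ' ⟨a, x₁, ha₁, rfl⟩ ⟨a, x₂, ha₂, rfl⟩
    ⟨a, x₃, ha₃, rfl⟩ ((swap_injective_of_left a).ne h₁₂) ((swap_injective_of_left a).ne h₁₃)
    ((swap_injective_of_left a).ne h₂₃) (ha ha₁) (ha ha₂) (ha ha₃) ⟨hd₁, hd₂, hd₃⟩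

theorem not_exists_common_point_apply_swap (hu : IsHammingIsometry u) (hu1 : u 1 = 1)
    {a b c : Fin n} (hab : a ≠ b) (hac : a ≠ c) (hbc : b ≠ c) :
    ¬∃ p, p ∈ (u (swap a b)).support ∧ p ∈ (u (swap a c)).support ∧
      p ∈ (u (swap b c)).support := by
  rintro ⟨p, hp₁, hp₂, hp₃⟩
  have hρ : #(u (cycle3 a b c)).support = 3 := by
    rw [hu.card_support_apply hu1, (isThreeCycle_cycle3 hab hac hbc).card_support]
  obtain ⟨hd₁, hd₂, hd₃⟩ := hdist_cycle3_swap hab hac hbc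
  rw [← hu] at hd₁ hd₂ hd₃
  exact not_hdist_eq_two_of_common_point hρ (hu.isSwap_apply hu1 ⟨a, b, hab, rfl⟩)
    (hu.isSwap_apply hu1 ⟨a, c, hac, rfl⟩) (hu.isSwap_apply hu1 ⟨b, c, hbc, rfl⟩)
    (hu.injective.ne ((swap_injective_of_left a).ne hbc))
    (hu.injective.ne (swap_comm a b ▸ (swap_injective_of_left b).ne hac))
    (hu.injective.ne ((swap_injective_of_right c).ne hab)) hp₁ hp₂ hp₃ ⟨hd₁, hd₂, hd₃⟩

theorem exists_mem_support_apply_swap (hu : IsHammingIsometry u) (hu1 : u 1 = 1)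
    (hn : 3 ≤ n) (a : Fin n) : ∃ p, ∀ x, x ≠ a → p ∈ (u (swap a x)).support := by
  obtain ⟨b, hba, -⟩ := exists_ne_ne (by simpa using hn) a a
  obtain ⟨c, hca, hcb⟩ := exists_ne_ne (by simpa using hn) a b
  have hb := hu.isSwap_apply hu1 ⟨a, b, hba.symm, rfl⟩
  have hc := hu.isSwap_apply hu1 ⟨a, c, hca.symm, rfl⟩
  obtain ⟨p, hpb, hpc⟩ := exists_mem_support_of_hdist_eq_three hb hc
    ((hu _ _).trans (hdist_swap_swap hba.symm hca.symm hcb.symm))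
  refine ⟨p, fun x hxa => ?_⟩
  by_cases hxb : x = b
  · rwa [hxb]
  by_cases hxc : x = c
  · rwa [hxc]
  obtain ⟨q, hqb, hqc, hqx⟩ := hu.exists_common_point_apply_swap hu1 hba.symm hca.symm
    (Ne.symm hxa) (Ne.symm hcb) (Ne.symm hxb) (Ne.symm hxc)
  suffices q = p from this ▸ hqx
  by_contra hqp
  refine (swap_injective_of_left a).ne hcb.symm (hu.injective ?_)
  rw [hb.eq_swap_of_mem_support hqp hqb hpb, hc.eq_swap_of_mem_support hqp hqc hpc]

theorem exists_perm_apply_swap (hu : IsHammingIsometry u) (hu1 : u 1 = 1) (hn : 3 ≤ n) :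
    ∃ σ : Perm (Fin n), ∀ a b, a ≠ b → u (swap a b) = swap (σ a) (σ b) := by
  choose g hg using hu.exists_mem_support_apply_swap hu1 hn
  have hg_inj : Injective g := by
    intro a b hgab
    by_contra hab
    obtain ⟨c, hca, hcb⟩ := exists_ne_ne (by simpa using hn) a b
    exact hu.not_exists_common_point_apply_swap hu1 hab (Ne.symm hca) (Ne.symm hcb)
      ⟨g a, hg a b (Ne.symm hab), hg a c hca, hgab ▸ hg b c hcb⟩
  refine ⟨Equiv.ofBijective g (Finite.injective_iff_bijective.1 hg_inj), fun a b hab => ?_⟩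
  exact (hu.isSwap_apply hu1 ⟨a, b, hab, rfl⟩).eq_swap_of_mem_support (hg_inj.ne hab)
    (hg a b hab.symm) (swap_comm a b ▸ hg b a hab)

theorem apply_cycle3_eq_or (hu : IsHammingIsometry u) (hu1 : u 1 = 1)
    (hswap : ∀ a b, a ≠ b → u (swap a b) = swap a b) {a b c : Fin n} (hab : a ≠ b) (hac : a ≠ c)
    (hbc : b ≠ c) : u (cycle3 a b c) = cycle3 a b c ∨ u (cycle3 a b c) = cycle3 a c b := by
  set ρ := u (cycle3 a b c)
  have hρ : ρ.IsThreeCycle := by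
    rw [← card_support_eq_three_iff, hu.card_support_apply hu1,
      (isThreeCycle_cycle3 hab hac hbc).card_support]
  obtain ⟨hd₁, hd₂, hd₃⟩ := hdist_cycle3_swap hab hac hbc
  rw [← hu, hswap _ _ hab] at hd₁
  rw [← hu, hswap _ _ hac, swap_comm] at hd₂
  rw [← hu, hswap _ _ hbc] at hd₃
  have ha := mem_support_of_hdist_swap_eq_two hρ.card_support hab hd₁
  have hsupp : ρ.support = {a, b, c} := by
    refine (eq_of_subset_of_card_le ?_ ?_).symm
    · simp only [insert_subset_iff, singleton_subset_iff]
      exact ⟨ha, mem_support_of_hdist_swap_eq_two hρ.card_support hbc hd₃,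
        mem_support_of_hdist_swap_eq_two hρ.card_support hac.symm hd₂⟩
    · rw [hρ.card_support, card_insert_of_notMem (by simp [hab, hac]), card_pair hbc]
  have hnodup := hρ.nodup_iff_mem_support.2 ha
  have h₁ : ρ a ∈ ρ.support := Perm.apply_mem_support.2 ha
  have h₂ : ρ (ρ a) ∈ ρ.support := Perm.apply_mem_support.2 h₁
  rw [hρ.eq_cycle3 ha]
  generalize ρ a = x, ρ (ρ a) = y at hnodup h₁ h₂ ⊢
  rw [hsupp] at h₁ h₂
  simp only [mem_insert, mem_singleton] at h₁ h₂
  simp only [List.nodup_cons, List.mem_cons, List.not_mem_nil] at hnodup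
  rcases h₁ with rfl | rfl | rfl <;> rcases h₂ with rfl | rfl | rfl <;> simp_all

theorem apply_cycle3_rev_eq_of_apply_cycle3_eq (hu : IsHammingIsometry u) (hu1 : u 1 = 1)
    (hswap : ∀ a b, a ≠ b → u (swap a b) = swap a b) {a b c : Fin n} (hab : a ≠ b) (hac : a ≠ c)
    (hbc : b ≠ c) (h : u (cycle3 a b c) = cycle3 a b c) : u (cycle3 a c b) = cycle3 a c b := by
  refine (hu.apply_cycle3_eq_or hu1 hswap hac hab hbc.symm).resolve_right fun h' => hbc ?_
  have := congrArg (· a) (hu.injective (h'.trans h.symm))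
  simpa [cycle3_apply_left, hab, hac] using this.symm

theorem apply_cycle3_eq_of_apply_cycle3_eq (hu : IsHammingIsometry u) (hu1 : u 1 = 1)
    (hswap : ∀ a b, a ≠ b → u (swap a b) = swap a b) {a b c d : Fin n} (hab : a ≠ b)
    (hac : a ≠ c) (hbc : b ≠ c) (had : a ≠ d) (hbd : b ≠ d)
    (h : u (cycle3 a b c) = cycle3 a b c) : u (cycle3 a b d) = cycle3 a b d := by
  by_cases hcd : c = d
  · rwa [← hcd]
  refine (hu.apply_cycle3_eq_or hu1 hswap hab had hbd).resolve_right fun h' => ?_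
  have := hu (cycle3 a b d) (cycle3 a b c)
  rw [h', h, hdist_cycle3_cycle3_rev hab hac hbc had hbd hcd,
    hdist_cycle3_cycle3 hbc hbd hcd] at this
  omega

/-- Fixing one 3-cycle propagates along 3-cycles sharing two points to all 3-cycles. -/
theorem apply_cycle3_eq_forall (hu : IsHammingIsometry u) (hu1 : u 1 = 1)
    (hswap : ∀ a b, a ≠ b → u (swap a b) = swap a b) {p q r : Fin n} (hpq : p ≠ q) (hpr : p ≠ r)
    (hqr : q ≠ r) (h : u (cycle3 p q r) = cycle3 p q r) {x y z : Fin n} (hxy : x ≠ y)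
    (hxz : x ≠ z) (hyz : y ≠ z) : u (cycle3 x y z) = cycle3 x y z := by
  have rotate {a b c : Fin n} (hab : a ≠ b) (hac : a ≠ c) (hbc : b ≠ c)
      (h : u (cycle3 a b c) = cycle3 a b c) : u (cycle3 b c a) = cycle3 b c a := by
    rwa [cycle3_rotate hab hac hbc]
  have fixed_at {a b c : Fin n} (hab : a ≠ b) (hac : a ≠ c) (hbc : b ≠ c)
      (h : u (cycle3 a b c) = cycle3 a b c) {b' c' : Fin n} (hab' : a ≠ b') (hac' : a ≠ c')
      (hbc' : b' ≠ c') : u (cycle3 a b' c') = cycle3 a b' c' := by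
    by_cases hbb' : b = b'
    · subst hbb'
      exact hu.apply_cycle3_eq_of_apply_cycle3_eq hu1 hswap hab hac hbc hac' hbc' h
    have h' := hu.apply_cycle3_eq_of_apply_cycle3_eq hu1 hswap hab hac hbc hab' hbb' h
    exact hu.apply_cycle3_eq_of_apply_cycle3_eq hu1 hswap hab' hab (Ne.symm hbb') hac' hbc'
      (hu.apply_cycle3_rev_eq_of_apply_cycle3_eq hu1 hswap hab hab' hbb' h')
  by_cases hxp : x = p
  · subst hxp
    exact fixed_at hpq hpr hqr h hxy hxz hyz
  by_cases hyp : y = p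
  · rw [hyp] at hxy hyz ⊢
    have h₁ := fixed_at hpq hpr hqr h hyz (Ne.symm hxp) hxz.symm
    exact rotate hxz.symm (Ne.symm hyz) hxy (rotate hyz (Ne.symm hxp) hxz.symm h₁)
  have h₁ := fixed_at hpq hpr hqr h (Ne.symm hxp) (Ne.symm hyp) hxy
  exact fixed_at hxy hxp hyp (rotate (Ne.symm hxp) (Ne.symm hyp) hxy h₁) hxy hxz hyz

theorem eq_self_of_apply_cycle3_eq (hu : IsHammingIsometry u) (hu1 : u 1 = 1)
    (hswap : ∀ a b, a ≠ b → u (swap a b) = swap a b) {p q r : Fin n} (hpq : p ≠ q) (hpr : p ≠ r)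
    (hqr : q ≠ r) (h : u (cycle3 p q r) = cycle3 p q r) (φ : Perm (Fin n)) : u φ = φ := by
  have hfix {ψ : Perm (Fin n)} (hψ : u ψ = ψ) : hdist (u φ) ψ = hdist φ ψ := by
    simpa only [hψ] using hu φ ψ
  exact eq_of_hdist_eq (hfix hu1) (fun a b hab => hfix (hswap a b hab))
    fun a b c hab hac hbc => hfix (hu.apply_cycle3_eq_forall hu1 hswap hpq hpr hqr h hab hac hbc)

theorem exists_eq_ite_inv (hu : IsHammingIsometry u) (hu1 : u 1 = 1)
    (hswap : ∀ a b, a ≠ b → u (swap a b) = swap a b) (hn : 3 ≤ n) :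
    ∃ b : Bool, ∀ φ, u φ = if b then φ⁻¹ else φ := by
  let p : Fin n := ⟨0, by omega⟩
  obtain ⟨q, hqp, -⟩ := exists_ne_ne (by simpa using hn) p p
  obtain ⟨r, hrp, hrq⟩ := exists_ne_ne (by simpa using hn) p q
  rcases hu.apply_cycle3_eq_or hu1 hswap hqp.symm hrp.symm hrq.symm with h | h
  · exact ⟨false, hu.eq_self_of_apply_cycle3_eq hu1 hswap hqp.symm hrp.symm hrq.symm h⟩
  · have hinv : (u (cycle3 p q r))⁻¹ = cycle3 p q r := by
      rw [h, inv_cycle3 hrp.symm hqp.symm hrq]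
    refine ⟨true, fun φ => inv_eq_iff_eq_inv.1 ?_⟩
    exact hu.inv.eq_self_of_apply_cycle3_eq (by simp [hu1])
      (fun a b hab => by simp [hswap a b hab]) hqp.symm hrp.symm hrq.symm hinv φ

theorem exists_eq_mul_ite_mul_inv {t : Perm (Fin n) → Perm (Fin n)}
    (ht : IsHammingIsometry t) (hn : 3 ≤ n) :
    ∃ α β : Perm (Fin n), ∃ b : Bool, ∀ φ, t φ = α * (if b then φ⁻¹ else φ) * β⁻¹ := by
  let u φ := (t 1)⁻¹ * t φ
  have hu : IsHammingIsometry u := ht.mul_left _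
  have hu1 : u 1 = 1 := inv_mul_cancel _
  obtain ⟨σ, hσ⟩ := hu.exists_perm_apply_swap hu1 hn
  have h1 : σ⁻¹ * u 1 * σ = 1 := by rw [hu1, mul_one, inv_mul_cancel]
  have hswap (a b : Fin n) (hab : a ≠ b) : σ⁻¹ * u (swap a b) * σ = swap a b := by
    rw [hσ a b hab, swap_apply_apply]
    group
  obtain ⟨b, hb⟩ := (hu.conj σ).exists_eq_ite_inv h1 hswap hn
  refine ⟨t 1 * σ, σ, b, fun φ => ?_⟩
  rw [← hb φ]
  simp only [u]
  group

end IsHammingIsometry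

theorem Equiv.Perm.center_eq_bot {α : Type*} [DecidableEq α] [Fintype α]
    (h : 3 ≤ Fintype.card α) : Subgroup.center (Perm α) = ⊥ := by
  refine eq_bot_iff.2 fun z hz => Subgroup.mem_bot.2 (Equiv.ext fun a => ?_)
  by_contra hza
  rw [Perm.one_apply] at hza
  obtain ⟨d, hda, hdz⟩ := exists_ne_ne h a (z a)
  have := congrArg (· a) (Subgroup.mem_center_iff.1 hz (swap a d))
  simp only [Perm.coe_mul, comp_apply, swap_apply_left, swap_apply_of_ne_of_ne hza hdz.symm] at this
  exact hda (z.injective this.symm)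

section Uniqueness

variable {G : Type*} [Group G] {α β α' β' : G}

theorem eq_of_forall_mul_mul_inv_eq (hG : Subgroup.center G = ⊥)
    (h : ∀ g, α * g * β⁻¹ = α' * g * β'⁻¹) : α = α' ∧ β = β' := by
  have hβ : β'⁻¹ = α'⁻¹ * α * β⁻¹ := by
    have h1 := h 1
    rw [mul_one, mul_one] at h1
    rw [mul_assoc, h1]
    group
  have hz : α'⁻¹ * α ∈ Subgroup.center G := Subgroup.mem_center_iff.2 fun g =>
    calc g * (α'⁻¹ * α) = α'⁻¹ * (α' * g * β'⁻¹) * β := by rw [hβ]; group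
      _ = α'⁻¹ * α * g := by rw [← h g]; group
  rw [hG, Subgroup.mem_bot, inv_mul_eq_one] at hz
  subst hz
  refine ⟨rfl, inv_injective ?_⟩
  rw [hβ, inv_mul_cancel, one_mul]

/-- If `g ↦ g⁻¹` were of the form `g ↦ γ g δ`, then inversion would be a homomorphism. -/
theorem not_forall_mul_mul_inv_eq_inv [Nontrivial G] (hG : Subgroup.center G = ⊥) :
    ¬∀ g, α * g * β⁻¹ = α' * g⁻¹ * β'⁻¹ := by
  intro h
  have hβ : β'⁻¹ = α'⁻¹ * α * β⁻¹ := by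
    have h1 := h 1
    rw [mul_one, inv_one, mul_one] at h1
    rw [mul_assoc, h1]
    group
  set z := α'⁻¹ * α with hz
  have hconj (g : G) : z * g = g⁻¹ * z :=
    calc z * g = α'⁻¹ * (α * g * β⁻¹) * β := by rw [hz]; group
      _ = g⁻¹ * z := by rw [h g, hβ, hz]; group
  have hcomm (a b : G) : b * a = a * b := by
    have hinv : (a * b)⁻¹ = a⁻¹ * b⁻¹ := mul_right_cancel (b := z) <|
      calc (a * b)⁻¹ * z = z * a * b := by rw [mul_assoc, hconj]
        _ = a⁻¹ * b⁻¹ * z := by rw [hconj, mul_assoc, hconj, mul_assoc]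
    rw [← inv_inj, hinv]
    exact mul_inv_rev b a
  obtain ⟨x, hx⟩ := exists_ne (1 : G)
  have : x ∈ Subgroup.center G := Subgroup.mem_center_iff.2 fun g => hcomm x g
  rw [hG, Subgroup.mem_bot] at this
  exact hx this

theorem eq_of_forall_mul_ite_mul_inv_eq [Nontrivial G] (hG : Subgroup.center G = ⊥)
    {b b' : Bool}
    (h : ∀ g, α * (if b then g⁻¹ else g) * β⁻¹ = α' * (if b' then g⁻¹ else g) * β'⁻¹) :
    (α, β, b) = (α', β', b') := by
  cases b <;> cases b' <;> simp only [Bool.false_eq_true, if_true, if_false] at h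
  · obtain ⟨rfl, rfl⟩ := eq_of_forall_mul_mul_inv_eq hG h
    rfl
  · exact absurd h (not_forall_mul_mul_inv_eq_inv hG)
  · exact absurd (fun g => (h g).symm) (not_forall_mul_mul_inv_eq_inv hG)
  · obtain ⟨rfl, rfl⟩ := eq_of_forall_mul_mul_inv_eq hG fun g => by simpa using h g⁻¹
    rfl

end Uniqueness

theorem hamming_isometry_unique_decomposition_general (n : ℕ) (hn : 3 ≤ n)
    (t : Equiv.Perm (Fin n) → Equiv.Perm (Fin n))
    (hiso : ∀ φ ψ, hdist (t φ) (t ψ) = hdist φ ψ) :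
    ∃! p : Equiv.Perm (Fin n) × Equiv.Perm (Fin n) × Bool,
      ∀ φ, t φ = p.1 * (if p.2.2 then φ⁻¹ else φ) * p.2.1⁻¹ := by
  obtain ⟨α, β, b, h⟩ := IsHammingIsometry.exists_eq_mul_ite_mul_inv hiso hn
  have : Nontrivial (Fin n) := Fin.nontrivial_iff_two_le.2 (by omega)
  refine ⟨(α, β, b), h, fun p hp => ?_⟩
  exact eq_of_forall_mul_ite_mul_inv_eq (Perm.center_eq_bot (by simpa using hn))
    fun φ => (hp φ).symm.trans (h φ)

/-- For `n ≥ 3`, every isometry `t` of `(Sym(n), d_H)` has the form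
`t φ = α * φ * β⁻¹` for all `φ`, or `t φ = α * φ⁻¹ * β⁻¹` for all `φ`,
and this representation is unique. -/
theorem hamming_isometry_unique_decomposition (n : ℕ) (hn : 3 ≤ n)
    (t : Equiv.Perm (Fin n) → Equiv.Perm (Fin n))
    (hbij : Function.Bijective t)
    (hiso : ∀ φ ψ, hdist (t φ) (t ψ) = hdist φ ψ) :
    ∃! p : Equiv.Perm (Fin n) × Equiv.Perm (Fin n) × Bool,
      ∀ φ, t φ = p.1 * (if p.2.2 then φ⁻¹ else φ) * p.2.1⁻¹ :=
  hamming_isometry_unique_decomposition_general n hn t hiso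
end

section
/- The pair of quotient sets of a permutation code is an isometry invariant up to equivalence: if C' = γCδ or C' = γC⁻¹δ for some γ, δ ∈ Sym(n), then there exist α, β ∈ Sym(n) such that either αΔ(C)α⁻¹ = Δ(C') and βΣ(C)β⁻¹ = Σ(C'), or αΔ(C)α⁻¹ = Σ(C') and βΣ(C)β⁻¹ = Δ(C'). -/
/-! Translating a code by `γ` on the left and `δ` on the right conjugates `Δ` by `γ` and `Σ`
by `δ⁻¹`, while inverting the code swaps `Δ` and `Σ`. -/

/-- The first quotient set `Δ(C) = {φψ⁻¹ : φ, ψ ∈ C}` of a permutation code. -/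
def quotDelta {n : ℕ} (C : Set (Equiv.Perm (Fin n))) : Set (Equiv.Perm (Fin n)) :=
  { x | ∃ φ ∈ C, ∃ ψ ∈ C, x = φ * ψ⁻¹ }

/-- The second quotient set `Σ(C) = {φ⁻¹ψ : φ, ψ ∈ C}` of a permutation code. -/
def quotSigma {n : ℕ} (C : Set (Equiv.Perm (Fin n))) : Set (Equiv.Perm (Fin n)) :=
  { x | ∃ φ ∈ C, ∃ ψ ∈ C, x = φ⁻¹ * ψ }

/-- Conjugation of a set of permutations: `αSα⁻¹`. -/
def conjSet {n : ℕ} (α : Equiv.Perm (Fin n)) (S : Set (Equiv.Perm (Fin n))) :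
    Set (Equiv.Perm (Fin n)) :=
  (fun σ => α * σ * α⁻¹) '' S

variable {n : ℕ}

lemma quotDelta_image_mul_mul (C : Set (Equiv.Perm (Fin n))) (γ δ : Equiv.Perm (Fin n)) :
    quotDelta ((fun φ => γ * φ * δ) '' C) = conjSet γ (quotDelta C) := by
  ext x
  constructor
  · rintro ⟨_, ⟨φ, hφ, rfl⟩, _, ⟨ψ, hψ, rfl⟩, rfl⟩
    exact ⟨φ * ψ⁻¹, ⟨φ, hφ, ψ, hψ, rfl⟩, by group⟩
  · rintro ⟨_, ⟨φ, hφ, ψ, hψ, rfl⟩, rfl⟩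
    exact ⟨_, ⟨φ, hφ, rfl⟩, _, ⟨ψ, hψ, rfl⟩, by group⟩

lemma quotSigma_image_mul_mul (C : Set (Equiv.Perm (Fin n))) (γ δ : Equiv.Perm (Fin n)) :
    quotSigma ((fun φ => γ * φ * δ) '' C) = conjSet δ⁻¹ (quotSigma C) := by
  ext x
  constructor
  · rintro ⟨_, ⟨φ, hφ, rfl⟩, _, ⟨ψ, hψ, rfl⟩, rfl⟩
    exact ⟨φ⁻¹ * ψ, ⟨φ, hφ, ψ, hψ, rfl⟩, by group⟩
  · rintro ⟨_, ⟨φ, hφ, ψ, hψ, rfl⟩, rfl⟩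
    exact ⟨_, ⟨φ, hφ, rfl⟩, _, ⟨ψ, hψ, rfl⟩, by group⟩

lemma quotDelta_inv (C : Set (Equiv.Perm (Fin n))) : quotDelta C⁻¹ = quotSigma C := by
  ext x
  constructor
  · rintro ⟨φ, hφ, ψ, hψ, rfl⟩
    exact ⟨φ⁻¹, hφ, ψ⁻¹, hψ, by rw [inv_inv]⟩
  · rintro ⟨φ, hφ, ψ, hψ, rfl⟩
    exact ⟨φ⁻¹, Set.inv_mem_inv.2 hφ, ψ⁻¹, Set.inv_mem_inv.2 hψ, by rw [inv_inv]⟩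

lemma quotSigma_inv (C : Set (Equiv.Perm (Fin n))) : quotSigma C⁻¹ = quotDelta C := by
  rw [← quotDelta_inv, inv_inv]

lemma Set.image_mul_inv_mul {G : Type*} [Group G] (C : Set G) (γ δ : G) :
    (fun φ => γ * φ⁻¹ * δ) '' C = (fun φ => γ * φ * δ) '' C⁻¹ := by
  rw [← Set.image_inv_eq_inv, Set.image_image]

/-- The pair of quotient sets is an isometry invariant up to equivalence: if `C' = γCδ`
or `C' = γC⁻¹δ`, then there are `α, β` with `αΔ(C)α⁻¹ = Δ(C')` and `βΣ(C)β⁻¹ = Σ(C')`,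
or `αΔ(C)α⁻¹ = Σ(C')` and `βΣ(C)β⁻¹ = Δ(C')`. -/
theorem quotient_sets_invariant (n : ℕ) (C C' : Set (Equiv.Perm (Fin n)))
    (γ δ : Equiv.Perm (Fin n))
    (h : C' = (fun φ => γ * φ * δ) '' C ∨ C' = (fun φ => γ * φ⁻¹ * δ) '' C) :
    ∃ α β : Equiv.Perm (Fin n),
      (conjSet α (quotDelta C) = quotDelta C' ∧ conjSet β (quotSigma C) = quotSigma C') ∨
      (conjSet α (quotDelta C) = quotSigma C' ∧ conjSet β (quotSigma C) = quotDelta C') := by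
  rcases h with rfl | rfl
  · exact ⟨γ, δ⁻¹, Or.inl ⟨(quotDelta_image_mul_mul C γ δ).symm,
      (quotSigma_image_mul_mul C γ δ).symm⟩⟩
  · rw [Set.image_mul_inv_mul, quotDelta_image_mul_mul, quotSigma_image_mul_mul, quotDelta_inv,
      quotSigma_inv]
    exact ⟨δ⁻¹, γ, Or.inr ⟨rfl, rfl⟩⟩
end
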